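/- Let r₁ and r₂ be rational numbers with 0 < r₁ ≤ r₂ < 1, let r and r' be rational numbers with 0 < r' ≤ r < 1, and suppose the triple (r₁, r₂, r) is realizable. Then the triple (r₁, r₂, r') is realizable; that is, realizability of (r₁, r₂, ·) is downward closed in the third coordinate. (This monotonicity is the key step in the proof that L-space-ness of S²(-1, r₁, r₂, r) is upward closed in r on (0,1).) -/

import Mathlib

/-!
The increasing rearrangement of `(x, y, z)` is `(min, median, max)`, and each of these three
order statistics is monotone in every entry. Lowering an entry therefore lowers the rearranged
triple coordinatewise, so the same pair `(a, k)` still witnesses realizability.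
-/

/-- A triple of rationals is *realizable* if there exist relatively prime positive
integers `a`, `k` with `0 < a ≤ k/2` such that the increasing rearrangement
`(t₁, t₂, t₃)` of `(s₁, s₂, s₃)` satisfies `t₁ < 1/k`, `t₂ < a/k`, `t₃ < (k-a)/k`. -/
def Realizable (s₁ s₂ s₃ : ℚ) : Prop :=
  ∃ a k : ℕ, 0 < a ∧ 2 * a ≤ k ∧ Nat.Coprime a k ∧
    ∃ t₁ t₂ t₃ : ℚ, ({t₁, t₂, t₃} : Multiset ℚ) = ({s₁, s₂, s₃} : Multiset ℚ) ∧
      t₁ ≤ t₂ ∧ t₂ ≤ t₃ ∧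
      t₁ < 1 / (k : ℚ) ∧ t₂ < (a : ℚ) / k ∧ t₃ < ((k : ℚ) - (a : ℚ)) / k

section median3

variable {α : Type*} [LinearOrder α]

def median3 (x y z : α) : α := max (min x y) (min (max x y) z)

theorem median3_comm (x y z : α) : median3 x y z = median3 y x z := by
  rw [median3, median3, min_comm, max_comm x]

theorem min_le_median3 (x y z : α) : min x (min y z) ≤ median3 x y z :=
  (min_le_min_left x (min_le_left y z)).trans (le_max_left _ _)

theorem median3_le_max (x y z : α) : median3 x y z ≤ max x (max y z) :=
  max_le ((min_le_left x y).trans (le_max_left x _))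
    ((min_le_right _ z).trans ((le_max_right y z).trans (le_max_right x _)))

theorem median3_mono {x y z x' y' z' : α} (hx : x' ≤ x) (hy : y' ≤ y) (hz : z' ≤ z) :
    median3 x' y' z' ≤ median3 x y z := by
  unfold median3
  gcongr

theorem multiset_min_median3_max (x y z : α) :
    ({min x (min y z), median3 x y z, max x (max y z)} : Multiset α) = {x, y, z} := by
  wlog hxy : x ≤ y generalizing x y
  · rw [min_left_comm, median3_comm, max_left_comm, this y x (le_of_not_ge hxy)]
    exact Multiset.cons_swap y x _
  rcases le_total z x with hzx | hxz
  · simpa [median3, hxy, hzx, hzx.trans hxy] using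
      (Multiset.cons_swap z x _).trans (congrArg (x ::ₘ ·) (Multiset.pair_comm z y))
  rcases le_total z y with hzy | hyz
  · simpa [median3, hxy, hxz, hzy] using Multiset.pair_comm z y
  · simp [median3, hxy, hyz, hxy.trans hyz]

theorem eq_of_multiset_eq_of_le {t₁ t₂ t₃ s₁ s₂ s₃ : α}
    (h : ({t₁, t₂, t₃} : Multiset α) = {s₁, s₂, s₃})
    (ht₁₂ : t₁ ≤ t₂) (ht₂₃ : t₂ ≤ t₃) (hs₁₂ : s₁ ≤ s₂) (hs₂₃ : s₂ ≤ s₃) :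
    t₁ = s₁ ∧ t₂ = s₂ ∧ t₃ = s₃ := by
  have sorted {u₁ u₂ u₃ : α} (h₁₂ : u₁ ≤ u₂) (h₂₃ : u₂ ≤ u₃) :
      [u₁, u₂, u₃].Pairwise (· ≤ ·) := by
    simp [h₁₂, h₂₃, h₁₂.trans h₂₃]
  simpa using (Multiset.coe_eq_coe.mp h).eq_of_pairwise' (sorted ht₁₂ ht₂₃) (sorted hs₁₂ hs₂₃)

end median3

theorem realizable_iff (x y z : ℚ) :
    Realizable x y z ↔ ∃ a k : ℕ, 0 < a ∧ 2 * a ≤ k ∧ a.Coprime k ∧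
      min x (min y z) < 1 / (k : ℚ) ∧ median3 x y z < (a : ℚ) / k ∧
      max x (max y z) < ((k : ℚ) - a) / k := by
  refine exists₂_congr fun a k => and_congr_right' <| and_congr_right' <| and_congr_right' ?_
  constructor
  · rintro ⟨t₁, t₂, t₃, hperm, h₁₂, h₂₃, hb₁, hb₂, hb₃⟩
    obtain ⟨rfl, rfl, rfl⟩ := eq_of_multiset_eq_of_le
      (hperm.trans (multiset_min_median3_max x y z).symm) h₁₂ h₂₃
      (min_le_median3 x y z) (median3_le_max x y z)
    exact ⟨hb₁, hb₂, hb₃⟩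
  · rintro ⟨hb₁, hb₂, hb₃⟩
    exact ⟨_, _, _, multiset_min_median3_max x y z, min_le_median3 x y z,
      median3_le_max x y z, hb₁, hb₂, hb₃⟩

theorem Realizable.mono {x y z x' y' z' : ℚ} (hx : x' ≤ x) (hy : y' ≤ y) (hz : z' ≤ z)
    (h : Realizable x y z) : Realizable x' y' z' := by
  rw [realizable_iff] at h ⊢
  obtain ⟨a, k, ha, hak, hcop, hb₁, hb₂, hb₃⟩ := h
  exact ⟨a, k, ha, hak, hcop, lt_of_le_of_lt (by gcongr) hb₁,
    (median3_mono hx hy hz).trans_lt hb₂, lt_of_le_of_lt (by gcongr) hb₃⟩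

theorem realizable_downward_general (r₁ r₂ r r' : ℚ)
    (hr'r : r' ≤ r)
    (h : Realizable r₁ r₂ r) :
    Realizable r₁ r₂ r' :=
  h.mono le_rfl le_rfl hr'r

/-- Realizability of `(r₁, r₂, ·)` is downward closed in the third coordinate. -/
theorem realizable_downward (r₁ r₂ r r' : ℚ)
    (h₁ : 0 < r₁) (h₁₂ : r₁ ≤ r₂) (h₂ : r₂ < 1)
    (hr' : 0 < r') (hr'r : r' ≤ r) (hr : r < 1)
    (h : Realizable r₁ r₂ r) :
    Realizable r₁ r₂ r' :=
  realizable_downward_general r₁ r₂ r r' hr'r h
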